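/- Let G be a group and C ⊆ G a normal cone whose induced relation ≥ is a partial order. Let r₋, r₊ : G → ℝ be functions satisfying: r₋(1) = 0; monotonicity, i.e. h ≥ h' implies r₋(h) ≥ r₋(h'); r₋(h) ≤ r₊(h) for all h ∈ G; r₋(g^k) ≥ k·r₋(g) for all k ∈ ℕ; and r₊(f^k) ≤ k·r₊(f) for all k ∈ ℕ. If f is a dominant, r₋(g) > 0 and r₊(f) > 0, then γ(f,g) ≥ r₋(g)/r₊(f); moreover γ_k(f,g) > 0 for every k ≥ 1. -/

import Mathlib

/-!
If `f ^ p ≥ g ^ k` then `k r₋(g) ≤ r₋(g ^ k) ≤ r₋(f ^ p) ≤ r₊(f ^ p) ≤ p r₊(f)`, so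
`γ_k(f, g) / k ≥ r₋(g) / r₊(f)` for every `k ≥ 1`, provided the infimum defining `γ_k` is
attained at a positive `p`. It is: since `f ∈ C`, an exponent `p ≤ 0` with `f ^ p ≥ g ^ k`
would give `1 ≥ g ^ k`, contradicting `r₋(g ^ k) ≥ k r₋(g) > 0 = r₋(1)`.
-/

open Filter

/-- A subset `C` of a group is a *normal cone* if it contains `1`, is closed under
multiplication, and is invariant under conjugation. -/
def IsNormalCone {G : Type*} [Group G] (C : Set G) : Prop :=
  (1 : G) ∈ C ∧ (∀ f g : G, f ∈ C → g ∈ C → f * g ∈ C) ∧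
    (∀ f h : G, f ∈ C → h * f * h⁻¹ ∈ C)

/-- The relation `f ≥ g` induced by the cone `C`: `f * g⁻¹ ∈ C`. -/
def ConeGe {G : Type*} [Group G] (C : Set G) (f g : G) : Prop := f * g⁻¹ ∈ C

/-- `f` is a *dominant*: it lies in the cone, is not `1`, and some power of `f`
dominates any given element. -/
def IsDominant {G : Type*} [Group G] (C : Set G) (f : G) : Prop :=
  f ∈ C ∧ f ≠ 1 ∧ ∀ g : G, ∃ p : ℕ, ConeGe C (f ^ p) g

/-- `γ_k(f,g) = inf { p ∈ ℤ | f^p ≥ g^k }`. -/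
noncomputable def gammaK {G : Type*} [Group G] (C : Set G) (f g : G) (k : ℕ) : ℤ :=
  sInf {p : ℤ | ConeGe C (f ^ p) (g ^ k)}

section

variable {G : Type*} [Group G] {C : Set G}

theorem IsNormalCone.pow_mem (hC : IsNormalCone C) {f : G} (hf : f ∈ C) (n : ℕ) :
    f ^ n ∈ C := by
  induction n with
  | zero => simpa using hC.1
  | succ n ih => rw [pow_succ]; exact hC.2.1 _ _ ih hf

theorem IsNormalCone.one_le_of_coneGe_zpow (hC : IsNormalCone C) {f x : G} (hf : f ∈ C)
    (hx : ¬ ConeGe C 1 x) {p : ℤ} (hp : ConeGe C (f ^ p) x) : 1 ≤ p := by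
  by_contra! hp1
  obtain ⟨n, hn⟩ := Int.eq_ofNat_of_zero_le (neg_nonneg.mpr (Int.lt_add_one_iff.mp hp1))
  apply hx
  have h := hC.2.1 _ _ (hC.pow_mem hf n) hp
  rwa [← zpow_natCast, ← hn, ← mul_assoc, ← zpow_add, neg_add_cancel, zpow_zero] at h

theorem IsDominant.coneGe_zpow_nonempty {f : G} (hf : IsDominant C f) (x : G) :
    {p : ℤ | ConeGe C (f ^ p) x}.Nonempty := by
  obtain ⟨n, hn⟩ := hf.2.2 x
  exact ⟨n, by simpa only [Set.mem_ofPred_eq, zpow_natCast] using hn⟩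

theorem coneGe_zpow_gammaK_and_one_le (hC : IsNormalCone C) {f g : G} (hf : IsDominant C f)
    {k : ℕ} (hk : ¬ ConeGe C 1 (g ^ k)) :
    ConeGe C (f ^ gammaK C f g k) (g ^ k) ∧ 1 ≤ gammaK C f g k := by
  have hbdd : BddBelow {p : ℤ | ConeGe C (f ^ p) (g ^ k)} :=
    ⟨1, fun _ hp => hC.one_le_of_coneGe_zpow hf.1 hk hp⟩
  have hmem := Int.csInf_mem (hf.coneGe_zpow_nonempty (g ^ k)) hbdd
  exact ⟨hmem, hC.one_le_of_coneGe_zpow hf.1 hk hmem⟩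

theorem le_mul_of_coneGe_zpow (rminus rplus : G → ℝ)
    (hmono : ∀ h h' : G, ConeGe C h h' → rminus h' ≤ rminus h)
    (hle : ∀ h : G, rminus h ≤ rplus h)
    (hiterplus : ∀ h : G, ∀ k : ℕ, rplus (h ^ k) ≤ (k : ℝ) * rplus h)
    {f x : G} {p : ℤ} (hp : 0 ≤ p) (hfx : ConeGe C (f ^ p) x) :
    rminus x ≤ p * rplus f := by
  lift p to ℕ using hp
  rw [zpow_natCast] at hfx
  calc rminus x ≤ rminus (f ^ p) := hmono _ _ hfx
    _ ≤ rplus (f ^ p) := hle _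
    _ ≤ p * rplus f := by exact_mod_cast hiterplus f p

end

theorem statement13_general {G : Type*} [Group G] (C : Set G) (hC : IsNormalCone C)
    (rminus rplus : G → ℝ)
    (hnorm : rminus (1 : G) = 0)
    (hmono : ∀ h h' : G, ConeGe C h h' → rminus h' ≤ rminus h)
    (hle : ∀ h : G, rminus h ≤ rplus h)
    (hiterminus : ∀ h : G, ∀ k : ℕ, (k : ℝ) * rminus h ≤ rminus (h ^ k))
    (hiterplus : ∀ h : G, ∀ k : ℕ, rplus (h ^ k) ≤ (k : ℝ) * rplus h)
    (f g : G) (hf : IsDominant C f) (hgpos : 0 < rminus g) (hfpos : 0 < rplus f) :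
    (∀ k : ℕ, 1 ≤ k → 0 < gammaK C f g k) ∧
    ∀ L : ℝ, Tendsto (fun k : ℕ => (gammaK C f g k : ℝ) / (k : ℝ)) atTop (nhds L) →
      rminus g / rplus f ≤ L := by
  have hnot : ∀ k : ℕ, 1 ≤ k → ¬ ConeGe C 1 (g ^ k) := fun k hk h1 => by
    have hkpos : (0 : ℝ) < k * rminus g := mul_pos (by exact_mod_cast hk) hgpos
    linarith [hmono _ _ h1, hiterminus g k]
  have hspec := fun k hk => coneGe_zpow_gammaK_and_one_le hC hf (hnot k hk)
  refine ⟨fun k hk => (hspec k hk).2, fun L hL => ge_of_tendsto hL ?_⟩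
  filter_upwards [eventually_ge_atTop 1] with k hk
  obtain ⟨hmem, hpos⟩ := hspec k hk
  rw [div_le_div_iff₀ hfpos (by exact_mod_cast hk)]
  calc rminus g * k = k * rminus g := mul_comm _ _
    _ ≤ rminus (g ^ k) := hiterminus g k
    _ ≤ gammaK C f g k * rplus f :=
      le_mul_of_coneGe_zpow rminus rplus hmono hle hiterplus (by omega) hmem

/-- Abstract form of Theorem 3.3.A: if `r₋, r₊ : G → ℝ` satisfy normalization,
monotonicity of `r₋`, `r₋ ≤ r₊`, super-homogeneity of `r₋` and sub-homogeneity of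
`r₊` under iterations, and if `f` is a dominant with `r₋(g) > 0` and `r₊(f) > 0`,
then `γ_k(f,g) > 0` for all `k ≥ 1` and `γ(f,g) ≥ r₋(g)/r₊(f)`. -/
theorem statement13 {G : Type*} [Group G] (C : Set G) (hC : IsNormalCone C)
    (hanti : ∀ f g : G, ConeGe C f g → ConeGe C g f → f = g)
    (rminus rplus : G → ℝ)
    (hnorm : rminus (1 : G) = 0)
    (hmono : ∀ h h' : G, ConeGe C h h' → rminus h' ≤ rminus h)
    (hle : ∀ h : G, rminus h ≤ rplus h)
    (hiterminus : ∀ h : G, ∀ k : ℕ, (k : ℝ) * rminus h ≤ rminus (h ^ k))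
    (hiterplus : ∀ h : G, ∀ k : ℕ, rplus (h ^ k) ≤ (k : ℝ) * rplus h)
    (f g : G) (hf : IsDominant C f) (hgpos : 0 < rminus g) (hfpos : 0 < rplus f) :
    (∀ k : ℕ, 1 ≤ k → 0 < gammaK C f g k) ∧
    ∀ L : ℝ, Tendsto (fun k : ℕ => (gammaK C f g k : ℝ) / (k : ℝ)) atTop (nhds L) →
      rminus g / rplus f ≤ L :=
  statement13_general C hC rminus rplus hnorm hmono hle hiterminus hiterplus f g hf hgpos hfpos
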